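/- arXiv:1607.07682 — 2 statements merged into one kernel-verified Lean document; each statement's English description precedes it below -/
import Mathlib

section
/- If n ≡ 1 (mod 6), n ≥ 7, and m = (n+2)/3, then S(m,n) = (n^2 - 14n + 13)/(6n). -/
open Finset

-- The sawtooth function ((t)).
open Classical in
noncomputable def saw (t : ℝ) : ℝ :=
  if ∃ z : ℤ, (z : ℝ) = t then 0 else t - ⌊t⌋ - 1/2

/-- The normalized Dedekind sum `S m n = 12 * s(m,n)`, with
`s(m,n) = Σ_{k=1}^{|n|} ((k/n))((mk/n))`. -/
noncomputable def S (m n : ℤ) : ℝ :=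
  12 * ∑ k ∈ Finset.Icc (1 : ℤ) |n|, saw ((k : ℝ) / n) * saw ((m : ℝ) * k / n)

lemma sum_Ioc_split {M : Type*} [AddCommMonoid M] (f : ℤ → M) {a b c : ℤ} (h1 : a ≤ b) (h2 : b ≤ c) :
    ∑ k ∈ Ioc a c, f k = ∑ k ∈ Ioc a b, f k + ∑ k ∈ Ioc b c, f k := by
  rw [← Finset.Ioc_union_Ioc_eq_Ioc h1 h2, Finset.sum_union]
  rw [Finset.disjoint_left]
  intro x hx hx'
  simp only [Finset.mem_Ioc] at hx hx'
  omega

lemma Ioc_succ_singleton (a : ℤ) : Ioc a (a+1) = {a+1} := by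
  ext x; simp only [Finset.mem_Ioc, Finset.mem_singleton]; omega

lemma sum_Ioc_succ {M : Type*} [AddCommMonoid M] (f : ℤ → M) {a b : ℤ} (h : a ≤ b) :
    ∑ k ∈ Ioc a (b+1), f k = ∑ k ∈ Ioc a b, f k + f (b+1) := by
  rw [sum_Ioc_split f h (by omega), Ioc_succ_singleton, Finset.sum_singleton]

lemma triple_split (f : ℤ → ℤ) : ∀ N : ℤ, 0 ≤ N →
    ∑ k ∈ Ioc 0 (3*N), f k = ∑ j ∈ Ioc 0 N, (f (3*j-2) + f (3*j-1) + f (3*j)) := by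
  refine Int.le_induction ?_ ?_
  · simp
  · intro N hN ih
    have h3 : 3*(N+1) = (3*N+1)+1+1 := by ring
    rw [h3, sum_Ioc_succ f (by omega), sum_Ioc_succ f (by omega),
      sum_Ioc_succ f (by omega), sum_Ioc_succ _ hN, ih]
    have e1 : 3*(N+1)-2 = 3*N+1 := by ring
    have e2 : 3*(N+1)-1 = 3*N+1+1 := by ring
    have e3 : 3*(N+1) = 3*N+1+1+1 := by ring
    rw [e1, e2, e3]; ring

lemma sum_quad (a b c L : ℤ) : ∀ N : ℤ, L ≤ N →
    6 * ∑ j ∈ Ioc L N, (a*j^2 + b*j + c) =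
      a*(N*(N+1)*(2*N+1) - L*(L+1)*(2*L+1)) + 3*b*(N*(N+1) - L*(L+1)) + 6*c*(N-L) := by
  refine Int.le_induction ?_ ?_
  · simp
  · intro N hN ih
    rw [sum_Ioc_succ _ hN, mul_add, ih]; ring

lemma saw_int (z : ℤ) : saw (z : ℝ) = 0 := by
  rw [saw, if_pos ⟨z, rfl⟩]

lemma saw_eq {a n : ℤ} (hn : 0 < n) (hnd : ¬ (n ∣ a)) :
    saw ((a : ℝ) / n) = (2*((a % n : ℤ) : ℝ) - n) / (2*n) := by
  have hn0 : (n : ℝ) ≠ 0 := by exact_mod_cast hn.ne'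
  have hni : ¬ ∃ z : ℤ, (z : ℝ) = (a : ℝ) / n := by
    rintro ⟨z, hz⟩
    apply hnd
    have : (a : ℝ) = (n * z : ℤ) := by
      push_cast
      field_simp at hz
      linarith
    exact ⟨z, by exact_mod_cast this⟩
  rw [saw, if_neg hni]
  have h1 : a = n * (a / n) + a % n := (Int.mul_ediv_add_emod a n).symm
  have hr0 : 0 ≤ a % n := Int.emod_nonneg a hn.ne'
  have hr1 : a % n < n := Int.emod_lt_of_pos a hn
  have hc : (a : ℝ) = (n:ℝ) * ((a / n : ℤ):ℝ) + ((a % n : ℤ):ℝ) := by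
    exact_mod_cast congrArg (Int.cast : ℤ → ℝ) h1
  have hx : (a : ℝ) / n = (a / n : ℤ) + ((a % n : ℤ) : ℝ) / n := by
    field_simp
    linarith [hc]
  have hfl : ⌊(a : ℝ) / n⌋ = a / n := by
    rw [hx, Int.floor_intCast_add]
    have : ⌊((a % n : ℤ) : ℝ) / n⌋ = 0 := by
      rw [Int.floor_eq_zero_iff]
      constructor
      · positivity
      · rw [div_lt_one (by exact_mod_cast hn)]
        exact_mod_cast hr1
    omega
  rw [hfl, hx]
  field_simp
  ring

lemma key (t : ℤ) (ht : 1 ≤ t) :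
    18 * ∑ k ∈ Ioc (0:ℤ) (6*t),
        (2*k - (6*t+1)) * (2*(((2*t+1)*k) % (6*t+1)) - (6*t+1)) =
      (6*t+1) * (6*t) * ((6*t+1) - 13) := by
  set n : ℤ := 6*t+1 with hn
  set f : ℤ → ℤ := fun k => (2*k - n) * (2*(((2*t+1)*k) % n) - n) with hf
  have h6t : (6:ℤ)*t = 3*(2*t) := by ring
  rw [h6t, triple_split f (2*t) (by omega), sum_Ioc_split _ (by omega : (0:ℤ) ≤ t) (by omega : t ≤ 2*t)]
  have hs1 : ∑ j ∈ Ioc (0:ℤ) t, (f (3*j-2) + f (3*j-1) + f (3*j)) =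
      ∑ j ∈ Ioc (0:ℤ) t, (72*j^2 + (-(108*t+66))*j + (36*t^2+40*t+19)) := by
    apply Finset.sum_congr rfl
    intro j hj
    simp only [Finset.mem_Ioc] at hj
    have e1 : (2*t+1)*(3*j-2) = (2*j+2*t-1) + n*(j-1) := by rw [hn]; ring
    have e2 : (2*t+1)*(3*j-1) = (2*j+4*t) + n*(j-1) := by rw [hn]; ring
    have e3 : (2*t+1)*(3*j) = (2*j) + n*j := by rw [hn]; ring
    rw [hf]
    simp only
    rw [e1, e2, e3, Int.add_mul_emod_self_left, Int.add_mul_emod_self_left,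
      Int.add_mul_emod_self_left,
      Int.emod_eq_of_lt (by omega) (by omega),
      Int.emod_eq_of_lt (by omega) (by omega),
      Int.emod_eq_of_lt (by omega) (by omega)]
    rw [hn]; ring
  have hs2 : ∑ j ∈ Ioc t (2*t), (f (3*j-2) + f (3*j-1) + f (3*j)) =
      ∑ j ∈ Ioc t (2*t), (72*j^2 + (-(180*t+78))*j + (108*t^2+88*t+25)) := by
    apply Finset.sum_congr rfl
    intro j hj
    simp only [Finset.mem_Ioc] at hj
    have e1 : (2*t+1)*(3*j-2) = (2*j+2*t-1) + n*(j-1) := by rw [hn]; ring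
    have e2 : (2*t+1)*(3*j-1) = (2*j-2*t-1) + n*j := by rw [hn]; ring
    have e3 : (2*t+1)*(3*j) = (2*j) + n*j := by rw [hn]; ring
    rw [hf]
    simp only
    rw [e1, e2, e3, Int.add_mul_emod_self_left, Int.add_mul_emod_self_left,
      Int.add_mul_emod_self_left,
      Int.emod_eq_of_lt (by omega) (by omega),
      Int.emod_eq_of_lt (by omega) (by omega),
      Int.emod_eq_of_lt (by omega) (by omega)]
    rw [hn]; ring
  rw [hs1, hs2]
  have q1 := sum_quad 72 (-(108*t+66)) (36*t^2+40*t+19) 0 t (by omega)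
  have q2 := sum_quad 72 (-(180*t+78)) (108*t^2+88*t+25) t (2*t) (by omega)
  rw [hn]
  linarith [q1, q2, sq_nonneg t]

theorem stmt9 (n : ℤ) (hn : 7 ≤ n) (hmod : n % 6 = 1) :
    S ((n + 2) / 3) n = ((n : ℝ)^2 - 14*n + 13) / (6*n) := by
  obtain ⟨t, rfl⟩ : ∃ t : ℤ, n = 6*t+1 := ⟨(n-1)/6, by omega⟩
  have ht : 1 ≤ t := by omega
  set n : ℤ := 6*t+1 with hn'
  have hm : (n + 2) / 3 = 2*t+1 := by omega
  have hnpos : (0:ℤ) < n := by omega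
  have hnR : (0:ℝ) < (n:ℝ) := by exact_mod_cast hnpos
  set m : ℤ := 2*t+1 with hm'
  rw [hm, S]
  have habs : |n| = n := abs_of_pos hnpos
  have hIcc : Finset.Icc (1:ℤ) n = Ioc 0 n := by
    ext x; simp only [Finset.mem_Icc, Finset.mem_Ioc]; omega
  rw [habs, hIcc]
  have hcop : IsCoprime n m := ⟨t, 1-3*t, by rw [hn', hm']; ring⟩
  have hnsplit : n = (6*t) + 1 := by rw [hn']
  rw [show Ioc (0:ℤ) n = Ioc 0 ((6*t)+1) by rw [hn']]
  rw [sum_Ioc_succ _ (by omega : (0:ℤ) ≤ 6*t)]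
  have hlast : saw (((6*t+1 : ℤ) : ℝ) / n) * saw ((m:ℝ) * ((6*t+1 : ℤ):ℝ) / n) = 0 := by
    have : ((6*t+1 : ℤ) : ℝ) / n = ((1:ℤ):ℝ) := by
      rw [hn']; push_cast; field_simp
    rw [this, saw_int]
    ring
  rw [hlast, add_zero]
  have hterm : ∀ k ∈ Ioc (0:ℤ) (6*t),
      saw ((k:ℝ)/n) * saw ((m:ℝ)*k/n) =
        (((2*k - n) * (2*((m*k) % n) - n) : ℤ) : ℝ) / (4*(n:ℝ)^2) := by
    intro k hk
    simp only [Finset.mem_Ioc] at hk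
    have hk1 : ¬ (n ∣ k) := by
      intro hd
      have := Int.le_of_dvd (by omega) hd
      omega
    have hk2 : ¬ (n ∣ m*k) := by
      intro hd
      apply hk1
      exact hcop.dvd_of_dvd_mul_left hd
    have h1 := saw_eq hnpos hk1
    have h2 := saw_eq hnpos hk2
    have hkmod : k % n = k := Int.emod_eq_of_lt (by omega) (by omega)
    rw [hkmod] at h1
    have hcast : (m:ℝ)*k/n = ((m*k : ℤ):ℝ)/n := by push_cast; ring
    rw [h1, hcast, h2, div_mul_div_comm]
    push_cast
    rw [show (2*(n:ℝ))*(2*(n:ℝ)) = 4*(n:ℝ)^2 by ring]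
  rw [Finset.sum_congr rfl hterm, ← Finset.sum_div]
  rw [← Int.cast_sum]
  have hkey := key t ht
  have hkeyR : (18:ℝ) * ((∑ k ∈ Ioc (0:ℤ) (6*t),
      (2*k - n) * (2*((m*k) % n) - n) : ℤ) : ℝ) = (n:ℝ) * (6*t) * ((n:ℝ) - 13) := by
    have : ((18 * ∑ k ∈ Ioc (0:ℤ) (6*t),
        (2*k - (6*t+1)) * (2*(((2*t+1)*k) % (6*t+1)) - (6*t+1)) : ℤ) : ℝ)
        = (((6*t+1) * (6*t) * ((6*t+1) - 13) : ℤ) : ℝ) := by exact_mod_cast hkey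
    push_cast at this ⊢
    rw [hn', hm']
    push_cast
    linarith
  have hne : (n:ℝ) ≠ 0 := hnR.ne'
  have h6t : ((6:ℝ)*t) = (n:ℝ) - 1 := by rw [hn']; push_cast; ring
  rw [h6t] at hkeyR
  push_cast at hkeyR
  push_cast
  field_simp
  linear_combination 4 * hkeyR
end

section
/- Let m, n, c, d be integers with n ≥ 1, 1 ≤ d < n, gcd(m,n) = gcd(c,d) = 1, and let q = md - nc ≠ 0 with sign ε ∈ {±1}. Then there exists an integer r coprime to q such that S(m,n) = S(c,d) + ε·S(r,|q|) + n/(dq) + d/(nq) + q/(nd) - 3ε. -/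
open Finset

lemma saw_of_ne {t : ℝ} (h : ¬∃ z : ℤ, (z : ℝ) = t) : saw t = t - ⌊t⌋ - 1/2 := if_neg h

lemma saw_add_int (t : ℝ) (z : ℤ) : saw (t + z) = saw t := by
  by_cases h : ∃ w : ℤ, (w : ℝ) = t
  · obtain ⟨w, rfl⟩ := h
    rw [show (w : ℝ) + z = ((w + z : ℤ) : ℝ) by push_cast; ring, saw_int, saw_int]
  · have h2 : ¬∃ w : ℤ, (w : ℝ) = t + z := by
      rintro ⟨w, hw⟩; exact h ⟨w - z, by push_cast; linarith⟩
    rw [saw_of_ne h2, saw_of_ne h, Int.floor_add_intCast]; push_cast; ring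

lemma saw_neg (t : ℝ) : saw (-t) = -saw t := by
  by_cases h : ∃ w : ℤ, (w : ℝ) = t
  · obtain ⟨w, rfl⟩ := h
    rw [show -(w : ℝ) = ((-w : ℤ) : ℝ) by push_cast; ring, saw_int, saw_int, neg_zero]
  · have h2 : ¬∃ w : ℤ, (w : ℝ) = -t := by
      rintro ⟨w, hw⟩; exact h ⟨-w, by push_cast; linarith⟩
    have hceil : (⌈t⌉ : ℤ) = ⌊t⌋ + 1 := by
      have h1 := Int.ceil_le_floor_add_one t
      have h2' : ⌊t⌋ < ⌈t⌉ := by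
        by_contra hc
        push_neg at hc
        have := Int.le_ceil t
        have := Int.floor_le t
        have : (⌈t⌉ : ℝ) = t := by
          have hcast : ((⌈t⌉ : ℤ) : ℝ) ≤ ((⌊t⌋ : ℤ) : ℝ) := by exact_mod_cast hc
          linarith
        exact h ⟨⌈t⌉, this⟩
      omega
    rw [saw_of_ne h2, saw_of_ne h, Int.floor_neg, hceil]; push_cast; ring

lemma exists_int_div_iff {a b : ℤ} (hb : b ≠ 0) :
    (∃ z : ℤ, (z : ℝ) = (a : ℝ) / b) ↔ b ∣ a := by
  have hb' : (b : ℝ) ≠ 0 := Int.cast_ne_zero.mpr hb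
  constructor
  · rintro ⟨z, hz⟩
    have : (a : ℝ) = b * z := by
      field_simp at hz; linarith
    exact ⟨z, by exact_mod_cast this⟩
  · rintro ⟨z, rfl⟩
    exact ⟨z, by push_cast; field_simp⟩

lemma floor_int_div (a b : ℤ) (hb : 0 < b) : ⌊(a : ℝ) / b⌋ = a / b := by
  lift b to ℕ using hb.le
  rw [show (a : ℝ) / ((b : ℤ) : ℝ) = ((((a : ℚ) / (b : ℚ)) : ℚ) : ℝ) by push_cast; ring,
    Rat.floor_cast, Rat.floor_intCast_div_natCast]

lemma saw_int_div {a b : ℤ} (hb : 0 < b) (h : ¬ b ∣ a) :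
    saw ((a : ℝ) / b) = (a : ℝ) / b - ((a / b : ℤ) : ℝ) - 1/2 := by
  rw [saw_of_ne (by rw [exists_int_div_iff hb.ne']; exact h), floor_int_div a b hb]

lemma S_eq (m n : ℤ) (hn : 1 ≤ n) :
    S m n = 12 * ∑ k ∈ Icc (1 : ℤ) n, saw ((k : ℝ) / n) * saw ((m : ℝ) * k / n) := by
  unfold S; rw [abs_of_pos (by omega)]

lemma S_one (m : ℤ) : S m 1 = 0 := by
  unfold S
  rw [show |(1 : ℤ)| = 1 from rfl, Finset.Icc_self, Finset.sum_singleton]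
  have h1 : saw (((1 : ℤ) : ℝ) / ((1 : ℤ) : ℝ)) = 0 := by
    rw [show (((1 : ℤ) : ℝ) / ((1 : ℤ) : ℝ)) = ((1 : ℤ) : ℝ) by norm_num]
    exact saw_int 1
  rw [h1]; ring

lemma S_neg_left (m n : ℤ) : S (-m) n = -S m n := by
  unfold S
  rw [← mul_neg, ← Finset.sum_neg_distrib]
  congr 1
  apply Finset.sum_congr rfl
  intro k _
  rw [show ((-m : ℤ) : ℝ) * k / n = -((m : ℝ) * k / n) by push_cast; ring, saw_neg]
  ring

lemma S_period (m n t : ℤ) (hn : n ≠ 0) : S (m + t * n) n = S m n := by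
  unfold S
  congr 1
  apply Finset.sum_congr rfl
  intro k _
  congr 1
  rw [show ((m + t * n : ℤ) : ℝ) * k / n = (m : ℝ) * k / n + ((t * k : ℤ) : ℝ) by
    have : (n : ℝ) ≠ 0 := Int.cast_ne_zero.mpr hn
    push_cast; field_simp]
  exact saw_add_int _ _

lemma Icc_insert_top (n : ℤ) (hn : 0 ≤ n) :
    Icc (1 : ℤ) (n + 1) = insert (n + 1) (Icc 1 n) := by
  ext x; simp only [mem_Icc, mem_insert]; omega

lemma sum_Icc_id (n : ℤ) (hn : 0 ≤ n) : ∑ i ∈ Icc (1 : ℤ) n, (i : ℝ) = n * (n + 1) / 2 := by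
  refine Int.le_induction (motive := fun n _ => ∑ i ∈ Icc (1 : ℤ) n, (i : ℝ) = n * (n + 1) / 2)
    ?_ ?_ n hn
  · simp [show Icc (1 : ℤ) 0 = ∅ from rfl]
  · intro k hk ih
    have ih' : ∑ i ∈ Icc (1 : ℤ) k, (i : ℝ) = k * (k + 1) / 2 := ih
    show ∑ i ∈ Icc (1 : ℤ) (k + 1), (i : ℝ) = _
    rw [Icc_insert_top k hk, Finset.sum_insert (by simp), ih']
    push_cast; ring

lemma sum_Icc_sq (n : ℤ) (hn : 0 ≤ n) :
    ∑ i ∈ Icc (1 : ℤ) n, (i : ℝ) ^ 2 = n * (n + 1) * (2 * n + 1) / 6 := by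
  refine Int.le_induction
    (motive := fun n _ => ∑ i ∈ Icc (1 : ℤ) n, (i : ℝ) ^ 2 = n * (n + 1) * (2 * n + 1) / 6) ?_ ?_ n hn
  · simp [show Icc (1 : ℤ) 0 = ∅ from rfl]
  · intro k hk ih
    have ih' : ∑ i ∈ Icc (1 : ℤ) k, (i : ℝ) ^ 2 = k * (k + 1) * (2 * k + 1) / 6 := ih
    show ∑ i ∈ Icc (1 : ℤ) (k + 1), (i : ℝ) ^ 2 = _
    rw [Icc_insert_top k hk, Finset.sum_insert (by simp), ih']
    push_cast; ring

lemma saw_frac {k μ : ℤ} (hμ : μ ∈ Icc (1 : ℤ) (k - 1)) :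
    saw ((μ : ℝ) / k) = (μ : ℝ) / k - 1/2 := by
  simp only [mem_Icc] at hμ
  have hnd : ¬ k ∣ μ := by
    intro hdvd
    have := Int.le_of_dvd (by omega) hdvd
    omega
  rw [saw_int_div (by omega) hnd,
    show μ / k = 0 from Int.ediv_eq_zero_of_lt (by omega) (by omega)]
  norm_num

lemma saw_mul_div {h k μ : ℤ} (hcop : Int.gcd h k = 1) (hμ : μ ∈ Icc (1 : ℤ) (k - 1)) :
    saw ((h : ℝ) * μ / k) = (h : ℝ) * μ / k - ((h * μ / k : ℤ) : ℝ) - 1/2 := by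
  simp only [mem_Icc] at hμ
  have hnd : ¬ k ∣ h * μ := by
    intro hdvd
    have hkμ : k ∣ μ :=
      Int.dvd_of_dvd_mul_right_of_gcd_one hdvd (by rw [Int.gcd_comm]; exact hcop)
    have := Int.le_of_dvd (by omega) hkμ
    omega
  have h2 := saw_int_div (a := h * μ) (b := k) (by omega) hnd
  rw [show ((h * μ : ℤ) : ℝ) = (h : ℝ) * μ by push_cast; ring] at h2
  exact h2

lemma sum_saw_perm (g : ℝ → ℝ) (k h : ℤ) (hh : 1 ≤ h) (hcop : Int.gcd k h = 1) :
    ∑ ν ∈ Icc (1 : ℤ) (h - 1), g (saw ((k : ℝ) * ν / h)) =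
      ∑ ν ∈ Icc (1 : ℤ) (h - 1), g (saw ((ν : ℝ) / h)) := by
  obtain ⟨u, v, huv⟩ : ∃ u v : ℤ, u * k + v * h = 1 := by
    obtain ⟨u, v, h'⟩ := Int.isCoprime_iff_gcd_eq_one.mpr hcop
    exact ⟨u, v, h'⟩
  have hh0 : h ≠ 0 := by omega
  have hval : ∀ a : ℤ, saw (((a % h : ℤ) : ℝ) / h) = saw ((a : ℝ) / h) := by
    intro a
    have hcast : ((a % h : ℤ) : ℝ) / h = (a : ℝ) / h + ((-(a / h) : ℤ) : ℝ) := by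
      rw [Int.emod_def]
      have : (h : ℝ) ≠ 0 := Int.cast_ne_zero.mpr hh0
      push_cast
      field_simp
      ring
    rw [hcast, saw_add_int]
  have hmem : ∀ w a : ℤ, Int.gcd w h = 1 → a ∈ Icc (1 : ℤ) (h - 1) →
      (w * a) % h ∈ Icc (1 : ℤ) (h - 1) := by
    intro w a hw ha
    simp only [mem_Icc] at *
    have h1 : 0 ≤ (w * a) % h := Int.emod_nonneg _ hh0
    have h2 : (w * a) % h < h := Int.emod_lt_of_pos _ (by omega)
    have h3 : (w * a) % h ≠ 0 := by
      intro h0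
      have hdvd : h ∣ w * a := Int.dvd_of_emod_eq_zero h0
      have hha : h ∣ a :=
        Int.dvd_of_dvd_mul_right_of_gcd_one hdvd (by rw [Int.gcd_comm]; exact hw)
      have := Int.le_of_dvd (by omega) hha
      omega
    omega
  have hcomp : ∀ w w' : ℤ, (∃ v' : ℤ, w * w' + v' * h = 1) → ∀ a ∈ Icc (1 : ℤ) (h - 1),
      (w' * ((w * a) % h)) % h = a := by
    rintro w w' ⟨v', hv⟩ a ha
    simp only [mem_Icc] at ha
    have h1 : (w' * ((w * a) % h)) % h = (w' * (w * a)) % h := by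
      conv_lhs => rw [Int.mul_emod, Int.emod_emod_of_dvd _ dvd_rfl, ← Int.mul_emod]
    rw [h1, show w' * (w * a) = a + (-(a * v')) * h by linear_combination a * hv,
      Int.add_mul_emod_self_right, Int.emod_eq_of_lt (by omega) (by omega)]
  have hgcdu : Int.gcd u h = 1 :=
    Int.isCoprime_iff_gcd_eq_one.mp ⟨k, v, by linarith [huv]⟩
  refine Finset.sum_nbij' (fun ν => (k * ν) % h) (fun ν => (u * ν) % h)
    (fun a ha => hmem k a hcop ha) (fun a ha => hmem u a hgcdu ha)
    (fun a ha => hcomp k u ⟨v, by linarith⟩ a ha)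
    (fun a ha => hcomp u k ⟨v, by linarith⟩ a ha) ?_
  intro a ha
  rw [show (k : ℝ) * a = ((k * a : ℤ) : ℝ) by push_cast; ring, ← hval (k * a)]

lemma count_swap_gen (f : ℤ → ℝ) (h k : ℤ) (hh : 1 ≤ h) (hk : 1 ≤ k) (hcop : Int.gcd h k = 1) :
    ∑ μ ∈ Icc (1 : ℤ) (k - 1), f μ * ((h * μ / k : ℤ) : ℝ) =
      ∑ ν ∈ Icc (1 : ℤ) (h - 1),
        (∑ μ ∈ Icc (1 : ℤ) (k - 1), f μ - ∑ μ ∈ Icc (1 : ℤ) (ν * k / h), f μ) := by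
  have step1 : ∀ μ ∈ Icc (1 : ℤ) (k - 1),
      f μ * ((h * μ / k : ℤ) : ℝ) =
        ∑ ν ∈ Icc (1 : ℤ) (h - 1), if ν * k ≤ h * μ then f μ else 0 := by
    intro μ hμ
    simp only [mem_Icc] at hμ
    have hfil : (Icc (1 : ℤ) (h - 1)).filter (fun ν => ν * k ≤ h * μ) = Icc 1 (h * μ / k) := by
      ext x
      simp only [mem_filter, mem_Icc]
      have hiff : x * k ≤ h * μ ↔ x ≤ h * μ / k := (Int.le_ediv_iff_mul_le (by omega)).symm
      have hub : h * μ / k ≤ h - 1 := by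
        have h3 : h * μ / k < h := by
          rw [Int.ediv_lt_iff_lt_mul (by omega)]
          nlinarith
        omega
      constructor
      · rintro ⟨⟨h1, _⟩, h3⟩
        exact ⟨h1, hiff.mp h3⟩
      · rintro ⟨h1, h2⟩
        exact ⟨⟨h1, by omega⟩, hiff.mpr h2⟩
    have h0 : (0 : ℤ) ≤ h * μ / k := Int.ediv_nonneg (by nlinarith) (by omega)
    have hcard : ∑ ν ∈ Icc (1 : ℤ) (h - 1), (if ν * k ≤ h * μ then (1 : ℝ) else 0) =
        ((h * μ / k : ℤ) : ℝ) := by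
      rw [Finset.sum_boole, hfil, Int.card_Icc]
      rw [show (h * μ / k + 1 - 1 : ℤ) = h * μ / k by ring]
      rw [show ((h * μ / k).toNat : ℝ) = (((h * μ / k).toNat : ℤ) : ℝ) by push_cast; ring]
      rw [Int.toNat_of_nonneg h0]
    rw [← hcard, Finset.mul_sum]
    apply Finset.sum_congr rfl
    intro ν _
    rw [mul_ite, mul_one, mul_zero]
  rw [Finset.sum_congr rfl step1, Finset.sum_comm]
  apply Finset.sum_congr rfl
  intro ν hν
  simp only [mem_Icc] at hν
  have hne : ∀ μ : ℤ, h * μ ≠ ν * k := by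
    intro μ heq
    have hdvd : h ∣ k * ν := ⟨μ, by linarith [heq.symm, mul_comm ν k]⟩
    have hdn : h ∣ ν := Int.dvd_of_dvd_mul_right_of_gcd_one hdvd hcop
    have := Int.le_of_dvd (by omega) hdn
    omega
  have hcompl : ∀ μ : ℤ, ν * k ≤ h * μ ↔ ¬(μ ≤ ν * k / h) := by
    intro μ
    have hiff : μ ≤ ν * k / h ↔ μ * h ≤ ν * k := Int.le_ediv_iff_mul_le (by omega)
    have hmc : μ * h = h * μ := mul_comm μ h
    constructor
    · intro hle hcon
      rw [hiff, hmc] at hcon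
      exact hne μ (le_antisymm hcon hle)
    · intro hnot
      by_contra hc
      push_neg at hc
      exact hnot (hiff.mpr (by rw [hmc]; linarith))
  have hub2 : ν * k / h ≤ k - 1 := by
    have h3 : ν * k / h < k := by
      rw [Int.ediv_lt_iff_lt_mul (by omega)]
      nlinarith
    omega
  have h0' : (0 : ℤ) ≤ ν * k / h := Int.ediv_nonneg (by nlinarith) (by omega)
  have hfil2 : (Icc (1 : ℤ) (k - 1)).filter (fun μ => μ ≤ ν * k / h) = Icc 1 (ν * k / h) := by
    ext x
    simp only [mem_filter, mem_Icc]
    omega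
  calc ∑ μ ∈ Icc (1 : ℤ) (k - 1), (if ν * k ≤ h * μ then f μ else 0)
      = ∑ μ ∈ Icc (1 : ℤ) (k - 1), (f μ - if μ ≤ ν * k / h then f μ else 0) := by
        apply Finset.sum_congr rfl
        intro μ _
        by_cases hc : ν * k ≤ h * μ
        · rw [if_pos hc, if_neg ((hcompl μ).mp hc)]; ring
        · rw [if_neg hc, if_pos (by by_contra hcon; exact hc ((hcompl μ).mpr hcon))]; ring
    _ = _ := by
        rw [Finset.sum_sub_distrib, ← Finset.sum_filter, hfil2]

lemma card_Icc_real (n : ℤ) (hn : 0 ≤ n) : (((Icc (1 : ℤ) n).card : ℕ) : ℝ) = (n : ℝ) := by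
  rw [Int.card_Icc, show (n + 1 - 1 : ℤ) = n by ring,
    show ((n.toNat : ℕ) : ℝ) = ((n.toNat : ℤ) : ℝ) by push_cast; ring, Int.toNat_of_nonneg hn]

lemma sum_saw_zero (h k : ℤ) (hk : 1 ≤ k) (hcop : Int.gcd h k = 1) :
    ∑ μ ∈ Icc (1 : ℤ) (k - 1), saw ((h : ℝ) * μ / k) = 0 := by
  have hk0 : (k : ℝ) ≠ 0 := Int.cast_ne_zero.mpr (by omega)
  have hperm : ∑ μ ∈ Icc (1 : ℤ) (k - 1), saw ((h : ℝ) * μ / k) =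
      ∑ μ ∈ Icc (1 : ℤ) (k - 1), saw ((μ : ℝ) / k) :=
    sum_saw_perm (fun x => x) h k hk hcop
  rw [hperm, Finset.sum_congr rfl (fun μ hμ => saw_frac hμ), Finset.sum_sub_distrib,
    ← Finset.sum_div, sum_Icc_id (k - 1) (by omega), Finset.sum_const, nsmul_eq_mul,
    card_Icc_real (k - 1) (by omega)]
  push_cast
  field_simp
  ring

lemma S_weighted (h k : ℤ) (hk : 1 ≤ k) (hcop : Int.gcd h k = 1) :
    S h k = 12 / (k : ℝ) * ∑ μ ∈ Icc (1 : ℤ) (k - 1), (μ : ℝ) * saw ((h : ℝ) * μ / k) := by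
  have hk0 : (k : ℝ) ≠ 0 := Int.cast_ne_zero.mpr (by omega)
  rw [S_eq h k hk,
    show Icc (1 : ℤ) k = insert k (Icc 1 (k - 1)) by
      ext x; simp only [mem_Icc, mem_insert]; omega,
    Finset.sum_insert (by simp),
    show saw ((k : ℝ) / k) = 0 by
      rw [div_self hk0, show (1 : ℝ) = ((1 : ℤ) : ℝ) by norm_num, saw_int],
    zero_mul, zero_add]
  have hpt : ∀ μ ∈ Icc (1 : ℤ) (k - 1),
      saw ((μ : ℝ) / k) * saw ((h : ℝ) * μ / k) =
        (μ : ℝ) * saw ((h : ℝ) * μ / k) / k - saw ((h : ℝ) * μ / k) / 2 := by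
    intro μ hμ
    rw [saw_frac hμ]
    field_simp
  rw [Finset.sum_congr rfl hpt, Finset.sum_sub_distrib, ← Finset.sum_div, ← Finset.sum_div,
    sum_saw_zero h k hk hcop, zero_div, sub_zero]
  ring

theorem S_recip (h k : ℤ) (hh : 1 ≤ h) (hk : 1 ≤ k) (hcop : Int.gcd h k = 1) :
    S h k + S k h = (h : ℝ) / k + (k : ℝ) / h + 1 / ((h : ℝ) * k) - 3 := by
  have hcop' : Int.gcd k h = 1 := by rw [Int.gcd_comm]; exact hcop
  have hk0 : (k : ℝ) ≠ 0 := Int.cast_ne_zero.mpr (by omega)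
  have hh0 : (h : ℝ) ≠ 0 := Int.cast_ne_zero.mpr (by omega)
  -- E1, E2
  have E1 : (k : ℝ) * S h k = 12 * ∑ μ ∈ Icc (1 : ℤ) (k - 1), (μ : ℝ) * saw ((h : ℝ) * μ / k) := by
    rw [S_weighted h k hk hcop]; field_simp
    exact Finset.sum_congr rfl (fun x _ => by rw [mul_comm (x : ℝ) (h : ℝ)])
  have E2 : (h : ℝ) * S k h = 12 * ∑ ν ∈ Icc (1 : ℤ) (h - 1), (ν : ℝ) * saw ((k : ℝ) * ν / h) := by
    rw [S_weighted k h hh hcop']; field_simp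
    exact Finset.sum_congr rfl (fun x _ => by rw [mul_comm (x : ℝ) (k : ℝ)])
  -- E3
  have hptX : ∀ μ ∈ Icc (1 : ℤ) (k - 1),
      (μ : ℝ) * saw ((h : ℝ) * μ / k) =
        (h : ℝ) * (μ : ℝ) ^ 2 / (k : ℝ) - (μ : ℝ) * ((h * μ / k : ℤ) : ℝ) - (μ : ℝ) / 2 := by
    intro μ hμ
    rw [saw_mul_div hcop hμ]
    field_simp
  have E3 : 12 * (∑ μ ∈ Icc (1 : ℤ) (k - 1), (μ : ℝ) * saw ((h : ℝ) * μ / k)) =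
      2 * (h : ℝ) * ((k : ℝ) - 1) * (2 * (k : ℝ) - 1) -
        12 * (∑ μ ∈ Icc (1 : ℤ) (k - 1), (μ : ℝ) * ((h * μ / k : ℤ) : ℝ)) -
        3 * ((k : ℝ) - 1) * (k : ℝ) := by
    rw [Finset.sum_congr rfl hptX]
    simp only [Finset.sum_sub_distrib]
    rw [← Finset.sum_div, ← Finset.mul_sum, sum_Icc_sq (k - 1) (by omega),
      ← Finset.sum_div, sum_Icc_id (k - 1) (by omega)]
    push_cast
    field_simp
    ring
  -- pointwise for P/W
  have hptP : ∀ ν ∈ Icc (1 : ℤ) (h - 1),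
      ((k * ν / h : ℤ) : ℝ) = (k : ℝ) * (ν : ℝ) / (h : ℝ) - saw ((k : ℝ) * ν / h) - 1/2 := by
    intro ν hν
    rw [saw_mul_div hcop' hν]
    ring
  -- E6
  have E6 : 2 * (h : ℝ) * (∑ ν ∈ Icc (1 : ℤ) (h - 1), ((k * ν / h : ℤ) : ℝ)) =
      (k : ℝ) * ((h : ℝ) - 1) * (h : ℝ) - (h : ℝ) * ((h : ℝ) - 1) := by
    rw [Finset.sum_congr rfl hptP]
    simp only [Finset.sum_sub_distrib]
    rw [← Finset.sum_div, ← Finset.mul_sum, sum_Icc_id (h - 1) (by omega),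
      sum_saw_zero k h hh hcop', Finset.sum_const, nsmul_eq_mul,
      card_Icc_real (h - 1) (by omega)]
    push_cast
    field_simp
    ring
  -- sum of saw^2
  have hYsq : (∑ ν ∈ Icc (1 : ℤ) (h - 1), (saw ((k : ℝ) * ν / h)) ^ 2) =
      ((h : ℝ) - 1) * ((h : ℝ) - 2) / (12 * (h : ℝ)) := by
    have hperm : (∑ ν ∈ Icc (1 : ℤ) (h - 1), (saw ((k : ℝ) * ν / h)) ^ 2) =
        ∑ ν ∈ Icc (1 : ℤ) (h - 1), (saw ((ν : ℝ) / h)) ^ 2 :=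
      sum_saw_perm (fun x => x ^ 2) k h hh hcop'
    have hptY : ∀ ν ∈ Icc (1 : ℤ) (h - 1),
        (saw ((ν : ℝ) / h)) ^ 2 = (ν : ℝ) ^ 2 / (h : ℝ) ^ 2 - (ν : ℝ) / (h : ℝ) + 1/4 := by
      intro ν hν
      rw [saw_frac hν]
      field_simp
      ring
    rw [hperm, Finset.sum_congr rfl hptY]
    simp only [Finset.sum_add_distrib, Finset.sum_sub_distrib]
    rw [← Finset.sum_div, sum_Icc_sq (h - 1) (by omega), ← Finset.sum_div,
      sum_Icc_id (h - 1) (by omega), Finset.sum_const, nsmul_eq_mul,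
      card_Icc_real (h - 1) (by omega)]
    push_cast
    field_simp
    ring
  -- E7
  have hptW : ∀ ν ∈ Icc (1 : ℤ) (h - 1),
      ((k * ν / h : ℤ) : ℝ) ^ 2 =
        (k : ℝ) ^ 2 * (ν : ℝ) ^ 2 / (h : ℝ) ^ 2 - (k : ℝ) * (ν : ℝ) / (h : ℝ) + 1/4
          + (saw ((k : ℝ) * ν / h)) ^ 2 + saw ((k : ℝ) * ν / h)
          - 2 * (k : ℝ) / (h : ℝ) * ((ν : ℝ) * saw ((k : ℝ) * ν / h)) := by
    intro ν hν
    rw [hptP ν hν]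
    field_simp
    ring
  have E7 : 12 * (h : ℝ) * (∑ ν ∈ Icc (1 : ℤ) (h - 1), ((k * ν / h : ℤ) : ℝ) ^ 2) =
      2 * (k : ℝ) ^ 2 * ((h : ℝ) - 1) * (2 * (h : ℝ) - 1) - 6 * (k : ℝ) * (h : ℝ) * ((h : ℝ) - 1)
        + 3 * (h : ℝ) * ((h : ℝ) - 1) + 2 * ((h : ℝ) - 1) * (2 * (h : ℝ) - 1)
        - 6 * (h : ℝ) * ((h : ℝ) - 1) + 3 * (h : ℝ) * ((h : ℝ) - 1)
        - 24 * (k : ℝ) * (∑ ν ∈ Icc (1 : ℤ) (h - 1), (ν : ℝ) * saw ((k : ℝ) * ν / h)) := by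
    rw [Finset.sum_congr rfl hptW]
    simp only [Finset.sum_add_distrib, Finset.sum_sub_distrib]
    rw [← Finset.sum_div, ← Finset.mul_sum, sum_Icc_sq (h - 1) (by omega),
      ← Finset.sum_div, ← Finset.mul_sum, sum_Icc_id (h - 1) (by omega),
      Finset.sum_const, nsmul_eq_mul, card_Icc_real (h - 1) (by omega),
      hYsq, sum_saw_zero k h hh hcop', ← Finset.mul_sum]
    push_cast
    field_simp
    ring
  -- E5 via counting
  have hcs : (∑ μ ∈ Icc (1 : ℤ) (k - 1), (μ : ℝ) * ((h * μ / k : ℤ) : ℝ)) =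
      ∑ ν ∈ Icc (1 : ℤ) (h - 1),
        ((∑ μ ∈ Icc (1 : ℤ) (k - 1), (μ : ℝ)) - ∑ μ ∈ Icc (1 : ℤ) (ν * k / h), (μ : ℝ)) :=
    count_swap_gen (fun μ => (μ : ℝ)) h k hh hk hcop
  have hptT : ∀ ν ∈ Icc (1 : ℤ) (h - 1),
      ((∑ μ ∈ Icc (1 : ℤ) (k - 1), (μ : ℝ)) - ∑ μ ∈ Icc (1 : ℤ) (ν * k / h), (μ : ℝ)) =
        ((k : ℝ) - 1) * (k : ℝ) / 2 -
          (((k * ν / h : ℤ) : ℝ) ^ 2 + ((k * ν / h : ℤ) : ℝ)) / 2 := by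
    intro ν hν
    simp only [mem_Icc] at hν
    rw [show ν * k = k * ν from mul_comm ν k, sum_Icc_id (k - 1) (by omega),
      sum_Icc_id (k * ν / h) (Int.ediv_nonneg (by nlinarith) (by omega))]
    push_cast
    ring
  have E5 : 4 * (∑ μ ∈ Icc (1 : ℤ) (k - 1), (μ : ℝ) * ((h * μ / k : ℤ) : ℝ)) =
      2 * ((h : ℝ) - 1) * ((k : ℝ) - 1) * (k : ℝ) -
        2 * ((∑ ν ∈ Icc (1 : ℤ) (h - 1), ((k * ν / h : ℤ) : ℝ) ^ 2) +
          (∑ ν ∈ Icc (1 : ℤ) (h - 1), ((k * ν / h : ℤ) : ℝ))) := by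
    rw [hcs, Finset.sum_congr rfl hptT]
    simp only [Finset.sum_sub_distrib]
    rw [Finset.sum_const, nsmul_eq_mul, card_Icc_real (h - 1) (by omega),
      ← Finset.sum_div, Finset.sum_add_distrib]
    push_cast
    ring
  -- assemble
  have main : (h : ℝ) * (k : ℝ) * (S h k + S k h) =
      (h : ℝ) ^ 2 + (k : ℝ) ^ 2 + 1 - 3 * (h : ℝ) * (k : ℝ) := by
    linear_combination (h : ℝ) * E1 + (k : ℝ) * E2 + (h : ℝ) * E3 + (-3 * (h : ℝ)) * E5 +
      3 * E6 + (1/2 : ℝ) * E7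
  have hne : (h : ℝ) * (k : ℝ) ≠ 0 := mul_ne_zero hh0 hk0
  field_simp
  linear_combination main

lemma gcd_neg_left' (a b : ℤ) : Int.gcd (-a) b = Int.gcd a b := by
  unfold Int.gcd; rw [Int.natAbs_neg]

lemma gcd_neg_right' (a b : ℤ) : Int.gcd a (-b) = Int.gcd a b := by
  unfold Int.gcd; rw [Int.natAbs_neg]

lemma gcd_add_mul_self (m n t : ℤ) (h : Int.gcd m n = 1) : Int.gcd (m + t * n) n = 1 := by
  rw [← Int.isCoprime_iff_gcd_eq_one] at h ⊢
  exact h.add_mul_right_left t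

lemma Gpos : ∀ D : ℕ, ∀ m n c d q : ℤ, d.toNat ≤ D → 1 ≤ n → 1 ≤ d →
    Int.gcd m n = 1 → Int.gcd c d = 1 → q = m * d - n * c → 1 ≤ q →
    ∃ r : ℤ, Int.gcd r q = 1 ∧
      S m n = S c d + S r q + (n : ℝ) / ((d : ℝ) * q) + (d : ℝ) / ((n : ℝ) * q) +
        (q : ℝ) / ((n : ℝ) * d) - 3 := by
  intro D
  induction D using Nat.strong_induction_on with
  | _ D ih =>
    intro m n c d q hdD hn hd hmn hcd hq hq1
    by_cases hd1 : d = 1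
    · subst hd1
      have hqm : q = m + (-c) * n := by rw [hq]; ring
      have hgq : Int.gcd q n = 1 := by rw [hqm]; exact gcd_add_mul_self m n (-c) hmn
      have hrec := S_recip q n hq1 hn hgq
      have hper : S q n = S m n := by rw [hqm]; exact S_period m n (-c) (by omega)
      refine ⟨-n, ?_, ?_⟩
      · rw [gcd_neg_left', Int.gcd_comm]; exact hgq
      · have hSneg : S (-n) q = -S n q := S_neg_left n q
        have hS1 : S c 1 = 0 := S_one c
        push_cast
        linear_combination (-1 : ℝ) * hper - hS1 - hSneg + hrec
    · have hd2 : 2 ≤ d := by omega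
      set t : ℤ := -(c / d) with ht
      set c' : ℤ := c + t * d with hc'
      have hc'mod : c' = c % d := by rw [hc', ht, Int.emod_def]; ring
      have hc'pos : 1 ≤ c' := by
        have h0 : 0 ≤ c % d := Int.emod_nonneg c (by omega)
        have hne : c' ≠ 0 := by
          intro h0'
          have hdvd : d ∣ c := Int.dvd_of_emod_eq_zero (by rw [← hc'mod]; exact h0')
          have hdg : d ∣ (Int.gcd c d : ℤ) := Int.dvd_coe_gcd hdvd dvd_rfl
          rw [hcd] at hdg
          have := Int.le_of_dvd (by norm_num) hdg
          omega
        omega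
      have hc'd : c' < d := by rw [hc'mod]; exact Int.emod_lt_of_pos c (by omega)
      set m' : ℤ := m + t * n with hm'
      have hq' : q = m' * d - n * c' := by rw [hm', hc', hq]; ring
      have hm'1 : 1 ≤ m' := by nlinarith [hq']
      have hgm' : Int.gcd m' n = 1 := gcd_add_mul_self m n t hmn
      have hgc' : Int.gcd c' d = 1 := gcd_add_mul_self c d t hcd
      have hq2 : q = (-n) * c' - m' * (-d) := by rw [hq']; ring
      have hgnm' : Int.gcd (-n) m' = 1 := by rw [gcd_neg_left', Int.gcd_comm]; exact hgm'
      have hgdc' : Int.gcd (-d) c' = 1 := by rw [gcd_neg_left', Int.gcd_comm]; exact hgc'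
      obtain ⟨r, hrgcd, hrel⟩ := ih c'.toNat (by omega) (-n) m' (-d) c' q (le_refl _)
        hm'1 hc'pos hgnm' hgdc' hq2 hq1
      have hrec1 := S_recip m' n hm'1 hn hgm'
      have hrec2 := S_recip c' d hc'pos hd hgc'
      have hSm : S m' n = S m n := by rw [hm']; exact S_period m n t (by omega)
      have hSc : S c' d = S c d := by rw [hc']; exact S_period c d t (by omega)
      have hSn : S (-n) m' = -S n m' := S_neg_left n m'
      have hSd : S (-d) c' = -S d c' := S_neg_left d c'
      refine ⟨r, hrgcd, ?_⟩
      have hnR : (n : ℝ) ≠ 0 := Int.cast_ne_zero.mpr (by omega)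
      have hdR : (d : ℝ) ≠ 0 := Int.cast_ne_zero.mpr (by omega)
      have hm'R : (m' : ℝ) ≠ 0 := Int.cast_ne_zero.mpr (by omega)
      have hc'R : (c' : ℝ) ≠ 0 := Int.cast_ne_zero.mpr (by omega)
      have hqR : (q : ℝ) ≠ 0 := Int.cast_ne_zero.mpr (by omega)
      have hqcast : (q : ℝ) = (m' : ℝ) * d - (n : ℝ) * c' := by exact_mod_cast hq'
      have key : ((m' : ℝ) / n + (n : ℝ) / m' + 1 / ((m' : ℝ) * n) - 3)
          - ((c' : ℝ) / d + (d : ℝ) / c' + 1 / ((c' : ℝ) * d) - 3)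
          + ((m' : ℝ) / ((c' : ℝ) * q) + (c' : ℝ) / ((m' : ℝ) * q) + (q : ℝ) / ((m' : ℝ) * c') - 3)
          = (n : ℝ) / ((d : ℝ) * q) + (d : ℝ) / ((n : ℝ) * q) + (q : ℝ) / ((n : ℝ) * d) - 3 := by
        have hqne : (m' : ℝ) * d - (n : ℝ) * c' ≠ 0 := by rw [← hqcast]; exact hqR
        rw [hqcast]
        field_simp
        ring
      rw [← hSm, ← hSc]
      linear_combination hrec1 - hSn + hrel + hSd - hrec2 + key

theorem stmt12 (m n c d q : ℤ) (hn : 1 ≤ n) (hd1 : 1 ≤ d) (hdn : d < n)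
    (hmn : Int.gcd m n = 1) (hcd : Int.gcd c d = 1) (hq : q = m * d - n * c) (hq0 : q ≠ 0) :
    ∃ r : ℤ, Int.gcd r q = 1 ∧
      S m n = S c d + (if 0 < q then (1 : ℝ) else -1) * S r |q| +
        (n : ℝ)/((d : ℝ)*q) + (d : ℝ)/((n : ℝ)*q) + (q : ℝ)/((n : ℝ)*d) -
        3 * (if 0 < q then (1 : ℝ) else -1) := by
  rcases lt_or_gt_of_ne hq0 with hneg | hpos
  · have h1 : -q = (-m) * d - n * (-c) := by rw [hq]; ring
    obtain ⟨r, hr, hrel⟩ := Gpos d.toNat (-m) n (-c) d (-q) (le_refl _) hn hd1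
      (by rw [gcd_neg_left']; exact hmn) (by rw [gcd_neg_left']; exact hcd) h1 (by omega)
    refine ⟨r, ?_, ?_⟩
    · rw [show q = -(-q) by ring, gcd_neg_right']; exact hr
    · rw [if_neg (by omega), abs_of_neg hneg]
      rw [S_neg_left m n, S_neg_left c d] at hrel
      push_cast at hrel ⊢
      linear_combination (-1 : ℝ) * hrel
  · obtain ⟨r, hr, hrel⟩ := Gpos d.toNat m n c d q (le_refl _) hn hd1 hmn hcd hq (by omega)
    refine ⟨r, hr, ?_⟩
    rw [if_pos hpos, abs_of_pos hpos]
    linear_combination hrel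
end
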